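/- The concurrent discrete-time Bellman operator is a contraction with modulus γ^{t_AS/H} in the supremum norm: for bounded Q-functions Q₁, Q₂, ‖T_c*Q₁ − T_c*Q₂‖_∞ ≤ γ^{t_AS/H} ‖Q₁ − Q₂‖_∞, where 0 < t_AS ≤ H and γ ∈ [0,1). -/
import Mathlib


open MeasureTheory

/-- The concurrent discrete-time Bellman operator with contraction modulus `c`:
`(T_c*Q)(s, a_prev, a) = r(s, a_prev) + c · max_{a'} 𝔼_{s' ~ p(s, a_prev)}[Q(s', a, a')]`. -/
noncomputable def cbellman {S A : Type*} [MeasurableSpace S] [Fintype A] [Nonempty A]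
    (p : S × A → PMF S) (r : S × A → ℝ) (c : ℝ) (Q : S × A × A → ℝ) : S × A × A → ℝ :=
  fun z => r (z.1, z.2.1) +
    c * Finset.univ.sup' Finset.univ_nonempty
      (fun a' => ∫ s', Q (s', z.2.2, a') ∂((p (z.1, z.2.1)).toMeasure))

/-- The concurrent discrete-time Bellman operator is a contraction with modulus
`γ ^ (t_AS / H)` in the supremum norm. -/
theorem cbellman_contraction {S A : Type*} [MeasurableSpace S] [Nonempty S]
    [Fintype A] [Nonempty A]
    (γ H tAS : ℝ) (hγ0 : 0 < γ) (hγ1 : γ < 1) (hH : 0 < H) (ht0 : 0 < tAS) (ht1 : tAS ≤ H)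
    (p : S × A → PMF S) (r : S × A → ℝ) (hr : ∃ C, ∀ sa, |r sa| ≤ C)
    (Q₁ Q₂ : S × A × A → ℝ)
    (hb1 : ∃ C, ∀ z, |Q₁ z| ≤ C) (hb2 : ∃ C, ∀ z, |Q₂ z| ≤ C)
    (hm1 : ∀ a a' : A, Measurable fun s' => Q₁ (s', a, a'))
    (hm2 : ∀ a a' : A, Measurable fun s' => Q₂ (s', a, a')) :
    ⨆ z : S × A × A, |cbellman p r (γ ^ (tAS / H)) Q₁ z - cbellman p r (γ ^ (tAS / H)) Q₂ z| ≤
      γ ^ (tAS / H) * ⨆ z : S × A × A, |Q₁ z - Q₂ z| := by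
  obtain ⟨C₁, hC₁⟩ := hb1
  obtain ⟨C₂, hC₂⟩ := hb2
  set c : ℝ := γ ^ (tAS / H) with hc
  have hc0 : 0 ≤ c := Real.rpow_nonneg hγ0.le _
  -- sup norm of the difference
  set M : ℝ := ⨆ z : S × A × A, |Q₁ z - Q₂ z| with hM
  have hbdd : BddAbove (Set.range fun z : S × A × A => |Q₁ z - Q₂ z|) := by
    refine ⟨C₁ + C₂, ?_⟩
    rintro x ⟨z, rfl⟩
    calc |Q₁ z - Q₂ z| ≤ |Q₁ z| + |Q₂ z| := abs_sub _ _
    _ ≤ C₁ + C₂ := add_le_add (hC₁ z) (hC₂ z)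
  have hMle : ∀ z : S × A × A, |Q₁ z - Q₂ z| ≤ M := fun z => le_ciSup hbdd z
  have hM0 : 0 ≤ M := le_trans (abs_nonneg _) (hMle Classical.ofNonempty)
  refine ciSup_le fun z => ?_
  obtain ⟨s, a, b⟩ := z
  -- integrability
  have hint : ∀ (μ : Measure S) [IsProbabilityMeasure μ] (a b : A),
      Integrable (fun s' => Q₁ (s', a, b)) μ ∧ Integrable (fun s' => Q₂ (s', a, b)) μ := by
    intro μ _ a b
    constructor
    · exact (integrable_const C₁).mono' (hm1 a b).aestronglyMeasurable
        (Filter.Eventually.of_forall fun s' => by simpa using hC₁ (s', a, b))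
    · exact (integrable_const C₂).mono' (hm2 a b).aestronglyMeasurable
        (Filter.Eventually.of_forall fun s' => by simpa using hC₂ (s', a, b))
  simp only [cbellman]
  have key : ∀ (μ : Measure S) [IsProbabilityMeasure μ] (b' : A),
      |(∫ s', Q₁ (s', b, b') ∂μ) - ∫ s', Q₂ (s', b, b') ∂μ| ≤ M := by
    intro μ _ b'
    obtain ⟨h1, h2⟩ := hint μ b b'
    rw [← integral_sub h1 h2]
    calc |∫ s', (Q₁ (s', b, b') - Q₂ (s', b, b')) ∂μ|
        ≤ M * (μ Set.univ).toReal := by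
          rw [← Real.norm_eq_abs]
          apply norm_integral_le_of_norm_le_const
          exact Filter.Eventually.of_forall fun s' => by
            simpa using hMle (s', b, b')
    _ = M := by simp
  have sup_diff : ∀ (f g : A → ℝ), (∀ a', |f a' - g a'| ≤ M) →
      |Finset.univ.sup' Finset.univ_nonempty f - Finset.univ.sup' Finset.univ_nonempty g| ≤ M := by
    intro f g h
    rw [abs_sub_le_iff]
    constructor
    · rw [sub_le_iff_le_add]
      apply Finset.sup'_le
      intro a' _
      have h1 := (abs_le.mp (h a')).2
      have h2 := Finset.le_sup' g (Finset.mem_univ a')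
      linarith
    · rw [sub_le_iff_le_add]
      apply Finset.sup'_le
      intro a' _
      have h1 := (abs_le.mp (h a')).1
      have h2 := Finset.le_sup' f (Finset.mem_univ a')
      linarith
  have := sup_diff (fun a' => ∫ s', Q₁ (s', b, a') ∂((p (s, a)).toMeasure))
      (fun a' => ∫ s', Q₂ (s', b, a') ∂((p (s, a)).toMeasure))
      (fun a' => key _ a')
  rw [add_sub_add_left_eq_sub, ← mul_sub, abs_mul, abs_of_nonneg hc0]
  exact mul_le_mul_of_nonneg_left this hc0
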